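/- arXiv:1509.05660 — 11 statements merged into one kernel-verified Lean document; each statement's English description precedes it below -/
import Mathlib

section
/- If G(∘) and G(∗) are two group operations on a finite set G of size n, and a∘b ≠ a∗b for some a,b ∈ G, then dist_a + dist_b + dist_{a∘b} ≥ n, where dist_x denotes the number of elements y ∈ G with x∘y ≠ x∗y. -/
/-!
If `c` lies in none of the three disagreement sets (of `a` shifted by `b ∘ ·`, of `b`, and
of `a ∘ b`), then
`(a ∘ b) ∗ c = (a ∘ b) ∘ c = a ∘ (b ∘ c) = a ∗ (b ∘ c) = a ∗ (b ∗ c) = (a ∗ b) ∗ c`,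
and cancelling `c` gives `a ∘ b = a ∗ b`. So when `a ∘ b ≠ a ∗ b` these sets cover `G`,
and shifting by the bijection `b ∘ ·` does not change the size of the first one.
-/

/-- The multiplication of a group structure `S` on the set `G`. -/
def mulOf {G : Type*} (S : Group G) : G → G → G := fun a b => letI := S; a * b

/-- `dist_a(∘,∗)`: the number of `b` with `a∘b ≠ a∗b`. -/
def rowDist {G : Type*} [Fintype G] [DecidableEq G] (S T : Group G) (a : G) : ℕ :=
  (Finset.univ.filter fun b => mulOf S a b ≠ mulOf T a b).card

/-- `dist(∘,∗)`: the number of pairs `(a,b)` with `a∘b ≠ a∗b`. -/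
def tableDist {G : Type*} [Fintype G] [DecidableEq G] (S T : Group G) : ℕ :=
  (Finset.univ.filter fun p : G × G => mulOf S p.1 p.2 ≠ mulOf T p.1 p.2).card

section mulOf

variable {G : Type*}

lemma mulOf_assoc (S : Group G) (a b c : G) :
    mulOf S (mulOf S a b) c = mulOf S a (mulOf S b c) := by
  let := S; exact mul_assoc a b c

lemma mulOf_left_cancel (S : Group G) {a b c : G} (h : mulOf S a b = mulOf S a c) : b = c := by
  let := S; exact mul_left_cancel h

lemma mulOf_right_cancel (S : Group G) {a b c : G} (h : mulOf S a c = mulOf S b c) : a = b := by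
  let := S; exact mul_right_cancel h

lemma mulOf_eq_of_rows_agree (S T : Group G) {a b c : G}
    (ha : mulOf S a (mulOf S b c) = mulOf T a (mulOf S b c))
    (hb : mulOf S b c = mulOf T b c)
    (hab : mulOf S (mulOf S a b) c = mulOf T (mulOf S a b) c) :
    mulOf S a b = mulOf T a b := by
  refine mulOf_right_cancel T (c := c) ?_
  rw [← hab, mulOf_assoc S, ha, hb, ← mulOf_assoc T]

variable [Fintype G] [DecidableEq G]

lemma card_filter_ne_mulOf_mulOf_le_rowDist (S T : Group G) (a b : G) :
    (Finset.univ.filter fun c => mulOf S a (mulOf S b c) ≠ mulOf T a (mulOf S b c)).card ≤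
      rowDist S T a := by
  refine Finset.card_le_card_of_injOn (mulOf S b) ?_ fun x _ y _ hxy => mulOf_left_cancel S hxy
  intro c hc
  simpa using hc

end mulOf

theorem dist_triple {G : Type*} [Fintype G] [DecidableEq G] (S T : Group G) (a b : G)
    (h : mulOf S a b ≠ mulOf T a b) :
    Fintype.card G ≤ rowDist S T a + rowDist S T b + rowDist S T (mulOf S a b) := by
  set A := Finset.univ.filter fun c => mulOf S a (mulOf S b c) ≠ mulOf T a (mulOf S b c)
  set B := Finset.univ.filter fun c => mulOf S b c ≠ mulOf T b c
  set C := Finset.univ.filter fun c => mulOf S (mulOf S a b) c ≠ mulOf T (mulOf S a b) c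
  have cover : Finset.univ ⊆ A ∪ B ∪ C := by
    intro c _
    by_contra hc
    simp only [A, B, C, Finset.mem_union, Finset.mem_filter, Finset.mem_univ, true_and, not_or,
      not_not] at hc
    exact h (mulOf_eq_of_rows_agree S T hc.1.1 hc.1.2 hc.2)
  calc Fintype.card G ≤ (A ∪ B ∪ C).card := Finset.card_le_card cover
    _ ≤ A.card + B.card + C.card :=
        (Finset.card_union_le _ _).trans (Nat.add_le_add_right (Finset.card_union_le _ _) _)
    _ ≤ rowDist S T a + rowDist S T b + rowDist S T (mulOf S a b) := by
        have hA := card_filter_ne_mulOf_mulOf_le_rowDist S T a b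
        exact Nat.add_le_add_right (Nat.add_le_add_right hA _) _
end

section
/- Let G(∘), G(∗) be group operations on a finite set G with H = {a ∈ G : a∘b = a∗b for all b} nonempty. If b ∈ H∘a (the right coset of H containing a with respect to ∘), then dist_a(∘,∗) = dist_b(∘,∗). -/
/-
Proof idea: if `h ∈ H` then `h∘a = h∗a`, so `(h∘a)∘y = h∘(a∘y)` and `(h∘a)∗y = h∗(a∗y) = h∘(a∗y)`.
Cancelling `h` on the left, `(h∘a)∘y = (h∘a)∗y` iff `a∘y = a∗y`: the rows of `a` and `h∘a`
disagree in exactly the same columns.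
-/

section MulOf

variable {G : Type*} (S : Group G)

lemma mulOf_assoc_s2 (x y z : G) : mulOf S (mulOf S x y) z = mulOf S x (mulOf S y z) := by
  let := S; exact mul_assoc x y z

lemma mulOf_left_cancel_iff {x y z : G} : mulOf S x y = mulOf S x z ↔ y = z := by
  let := S; exact mul_left_cancel_iff

end MulOf

section RowDist

variable {G : Type*} (S T : Group G) {h : G}

lemma mulOf_eq_iff_of_row_eq (hh : ∀ y, mulOf S h y = mulOf T h y) (a y : G) :
    mulOf S (mulOf S h a) y = mulOf T (mulOf S h a) y ↔ mulOf S a y = mulOf T a y := by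
  have hS : mulOf S (mulOf S h a) y = mulOf S h (mulOf S a y) := mulOf_assoc_s2 S h a y
  have hT : mulOf T (mulOf S h a) y = mulOf S h (mulOf T a y) := by
    rw [hh a, mulOf_assoc_s2 T h a y, hh]
  rw [hS, hT, mulOf_left_cancel_iff]

lemma rowDist_mulOf_of_row_eq [Fintype G] [DecidableEq G]
    (hh : ∀ y, mulOf S h y = mulOf T h y) (a : G) :
    rowDist S T (mulOf S h a) = rowDist S T a := by
  unfold rowDist
  congr 1
  exact Finset.filter_congr fun y _ => not_congr (mulOf_eq_iff_of_row_eq S T hh a y)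

end RowDist

theorem rowDist_constant_on_cosets_general {G : Type*} [Fintype G] [DecidableEq G] (S T : Group G)
    (H : Set G) (hH : H = {x | ∀ y, mulOf S x y = mulOf T x y})
    (a b : G) (hb : ∃ h ∈ H, b = mulOf S h a) :
    rowDist S T a = rowDist S T b := by
  obtain ⟨h, hh, rfl⟩ := hb
  subst hH
  exact (rowDist_mulOf_of_row_eq S T hh a).symm

theorem rowDist_constant_on_cosets {G : Type*} [Fintype G] [DecidableEq G] (S T : Group G)
    (H : Set G) (hH : H = {x | ∀ y, mulOf S x y = mulOf T x y})
    (hne : H.Nonempty) (a b : G) (hb : ∃ h ∈ H, b = mulOf S h a) :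
    rowDist S T a = rowDist S T b :=
  rowDist_constant_on_cosets_general S T H hH a b hb
end

section
/- Let G(∘), G(∗) be group operations on a finite set G of odd cardinality n. If a ∈ G satisfies dist_a(∘,∗) > 0, then dist_a(∘,∗) ≥ 3. -/
/-! In a group of order `n` with `n` odd, `sign (L_a) = sign (L_a) ^ n = sign (L_{a ^ n}) = 1`, so
every left translation is even. Hence `β = L_a(∘)⁻¹ * L_a(∗)` is even; it moves exactly the `b` with
`a ∘ b ≠ a ∗ b`, and a nontrivial even permutation is not a transposition, so it moves at least three
points. -/

open Finset

namespace Equiv.Perm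

variable {α : Type*} [Fintype α] [DecidableEq α]

theorem sign_mulLeft_of_odd_card {G : Type*} [Group G] [Fintype G] [DecidableEq G]
    (hG : Odd (Fintype.card G)) (a : G) : sign (Equiv.mulLeft a) = 1 :=
  calc sign (Equiv.mulLeft a) = sign (Equiv.mulLeft a) ^ Fintype.card G := by
        rw [Int.units_pow_eq_pow_mod_two, Nat.odd_iff.mp hG, pow_one]
    _ = 1 := by rw [← map_pow, Equiv.pow_mulLeft, pow_card_eq_one, Equiv.mulLeft_one, map_one]

theorem three_le_card_support_of_sign_eq_one {σ : Perm α} (hσ : σ ≠ 1) (hsign : sign σ = 1) :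
    3 ≤ #σ.support := by
  have hne_two : #σ.support ≠ 2 := fun h ↦ by
    rw [(card_support_eq_two.mp h).sign_eq] at hsign
    exact absurd hsign (by decide)
  have := two_le_card_support_of_ne_one hσ
  omega

theorem card_filter_apply_ne (σ τ : Perm α) : #{b | σ b ≠ τ b} = #(σ⁻¹ * τ).support := by
  congr 1
  ext b
  simp [mem_support, Equiv.eq_symm_apply, eq_comm]

theorem three_le_card_filter_apply_ne {σ τ : Perm α} (hsign : sign σ = sign τ)
    (hne : 0 < #{b | σ b ≠ τ b}) : 3 ≤ #{b | σ b ≠ τ b} := by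
  rw [card_filter_apply_ne] at hne ⊢
  refine three_le_card_support_of_sign_eq_one (fun h1 ↦ by simp [h1] at hne) ?_
  rw [map_mul, map_inv, hsign, inv_mul_cancel]

end Equiv.Perm

theorem rowDist_ge_three_of_odd {G : Type*} [Fintype G] [DecidableEq G] (S T : Group G)
    (hodd : Odd (Fintype.card G)) (a : G) (h : 0 < rowDist S T a) :
    3 ≤ rowDist S T a := by
  have hS := letI := S; Equiv.Perm.sign_mulLeft_of_odd_card hodd a
  have hT := letI := T; Equiv.Perm.sign_mulLeft_of_odd_card hodd a
  -- `rowDist S T a` is `#{b | L_a(S) b ≠ L_a(T) b}` by unfolding `mulOf`.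
  exact Equiv.Perm.three_le_card_filter_apply_ne (hS.trans hT.symm) h
end

section
/- Let G(∘), G(∗) be group operations on a finite set G and a ∈ G an element with dist_a(∘,∗) > 0 whose orders in G(∘) and G(∗) are equal. Then dist_a(∘,∗) ≥ 3. -/
/-- The order of `a` in the group structure `S`. -/
noncomputable def ordOf {G : Type*} (S : Group G) (a : G) : ℕ := letI := S; orderOf a


/-!
Left translation `L_a : b ↦ a b` has all its cycles of length `|a|`, namely the right cosets of
`⟨a⟩`, so its sign is `(-1) ^ (n + n / |a|)` with `n = |G|`: it depends only on `|a|`. Hence if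
`|a|_∘ = |a|_∗`, the permutation `L_a(∘)⁻¹ L_a(∗)` is even. Its support is exactly the set of `b`
with `a ∘ b ≠ a ∗ b`, and a nontrivial even permutation moves at least three points.
-/

open Equiv Equiv.Perm Finset

namespace Equiv.Perm

variable {α : Type*} [Fintype α] [DecidableEq α]

theorem eq_of_mem_cycleType_of_card_support_cycleOf {σ : Perm α} {k n : ℕ}
    (h : ∀ x ∈ σ.support, #(σ.cycleOf x).support = k) (hn : n ∈ σ.cycleType) : n = k := by
  rw [cycleType_def, Multiset.mem_map] at hn
  obtain ⟨c, hc, rfl⟩ := hn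
  obtain ⟨hcycle, hcσ⟩ := mem_cycleFactorsFinset_iff.mp hc
  obtain ⟨x, hx, -⟩ := hcycle
  have hxc : x ∈ c.support := mem_support.mpr hx
  have hxσ : x ∈ σ.support := mem_support.mpr (hcσ x hxc ▸ hx)
  rw [Function.comp_apply, cycle_is_cycleOf hxc hc, h x hxσ]

theorem card_filter_apply_ne_eq_card_support_inv_mul (σ τ : Perm α) :
    #{x | σ x ≠ τ x} = #(σ⁻¹ * τ).support := by
  congr 1
  ext x
  rw [mem_filter, mem_support, Perm.mul_apply, Ne, Ne, Perm.inv_eq_iff_eq]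
  simp only [mem_univ, true_and, eq_comm]

theorem three_le_card_filter_apply_ne_of_sign_eq {σ τ : Perm α} (hne : σ ≠ τ)
    (hsign : sign σ = sign τ) : 3 ≤ #{x | σ x ≠ τ x} := by
  rw [card_filter_apply_ne_eq_card_support_inv_mul]
  have hle : 2 ≤ #(σ⁻¹ * τ).support :=
    two_le_card_support_of_ne_one (by rwa [Ne, inv_mul_eq_one])
  have hne2 : #(σ⁻¹ * τ).support ≠ 2 := fun h2 => by
    have hswap := (card_support_eq_two.mp h2).sign_eq
    rw [map_mul, map_inv, hsign, inv_mul_cancel] at hswap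
    exact absurd hswap (by decide)
  omega

end Equiv.Perm

section LeftTranslation

variable {G : Type*} [Group G] [Fintype G] [DecidableEq G]

theorem card_support_cycleOf_mulLeft {a : G} (ha : a ≠ 1) (b : G) :
    #((Equiv.mulLeft a).cycleOf b).support = orderOf a := by
  have hb : Equiv.mulLeft a b ≠ b := by simpa using ha
  have hcycle := isCycle_cycleOf _ hb
  rw [← hcycle.orderOf, orderOf_eq_orderOf_iff]
  intro n
  rw [hcycle.pow_eq_one_iff' (by rwa [cycleOf_apply_self]), cycleOf_pow_apply_self,
    pow_mulLeft, coe_mulLeft, mul_eq_right]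

theorem cycleType_mulLeft {a : G} (ha : a ≠ 1) :
    (Equiv.mulLeft a).cycleType =
      Multiset.replicate (Fintype.card G / orderOf a) (orderOf a) := by
  set σ := Equiv.mulLeft a
  have hall : ∀ n ∈ σ.cycleType, n = orderOf a :=
    fun _ => eq_of_mem_cycleType_of_card_support_cycleOf fun b _ =>
      card_support_cycleOf_mulLeft ha b
  have hrep := Multiset.eq_replicate_card.mpr hall
  have hsum : Multiset.card σ.cycleType * orderOf a = Fintype.card G := by
    have hsupp : σ.support = univ := eq_univ_of_forall fun b => by simpa [σ] using ha
    rw [← card_univ, ← hsupp, ← sum_cycleType, hrep, Multiset.sum_replicate, smul_eq_mul,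
      Multiset.card_replicate]
  rw [hrep, ← hsum, Nat.mul_div_cancel _ (orderOf_pos a)]

theorem sign_mulLeft (a : G) :
    sign (Equiv.mulLeft a) = (-1) ^ (Fintype.card G + Fintype.card G / orderOf a) := by
  rcases eq_or_ne a 1 with rfl | ha
  · rw [mulLeft_one, map_one, orderOf_one, Nat.div_one, ← two_mul, pow_mul, neg_one_sq, one_pow]
  · rw [sign_of_cycleType, cycleType_mulLeft ha, Multiset.sum_replicate, smul_eq_mul,
      Multiset.card_replicate, Nat.div_mul_cancel orderOf_dvd_card]

end LeftTranslation

theorem rowDist_ge_three_of_order_matched {G : Type*} [Fintype G] [DecidableEq G]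
    (S T : Group G) (a : G) (h : 0 < rowDist S T a)
    (hord : ordOf S a = ordOf T a) :
    3 ≤ rowDist S T a := by
  let σ : Perm G := letI := S; Equiv.mulLeft a
  let τ : Perm G := letI := T; Equiv.mulLeft a
  have hrow : rowDist S T a = #{b | σ b ≠ τ b} := rfl
  have hne : σ ≠ τ := by
    obtain ⟨b, hb⟩ := card_pos.mp (hrow ▸ h)
    exact fun hστ => (mem_filter.mp hb).2 (congrFun (congrArg DFunLike.coe hστ) b)
  have hS : sign σ = (-1) ^ (Fintype.card G + Fintype.card G / ordOf S a) :=
    letI := S; sign_mulLeft a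
  have hT : sign τ = (-1) ^ (Fintype.card G + Fintype.card G / ordOf T a) :=
    letI := T; sign_mulLeft a
  rw [hrow]
  exact three_le_card_filter_apply_ne_of_sign_eq hne (by rw [hS, hT, hord])
end

section
/- Let G(∘), G(∗) be group operations on a finite set G of size n, and let a ∈ G have order σ in G(∘) and order τ in G(∗) with σ > τ. Then dist_a(∘,∗) ≥ (n/σ)·⌈σ/τ⌉, and in particular dist_a(∘,∗) ≥ n/τ. -/
/-
Let `D` be the set of `b` with `a ∘ b ≠ a ∗ b`. If `a ∘ ·` and `a ∗ ·` agreed at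
`x, a ∘ x, …, a^(τ-1) ∘ x`, then `a^τ ∘ x = a^τ ∗ x = x`, forcing `σ ∣ τ`. So every run
of `τ` consecutive points `a^j ∘ x` meets `D`, and `τ` translates of `D` cover `G`,
whence `n ≤ τ |D|`. Inside one `⟨a⟩_∘`-orbit, a cycle of length `σ`, the same covering
gives at least `⌈σ/τ⌉` points of `D`; double counting the pairs `(h, b)` with
`h ∈ ⟨a⟩_∘` and `h ∘ b ∈ D` yields `n ⌈σ/τ⌉ ≤ σ |D|`.
-/

open Finset

theorem Function.exists_lt_apply_iterate_ne {α : Type*} (f g : α → α) (x : α) (k : ℕ)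
    (h : f^[k] x ≠ g^[k] x) : ∃ j < k, f (f^[j] x) ≠ g (f^[j] x) := by
  contrapose! h
  induction k with
  | zero => rfl
  | succ k ih =>
    rw [Function.iterate_succ_apply', Function.iterate_succ_apply', h k k.lt_succ_self,
      ih fun j hj => h j (by omega)]

theorem card_le_mul_card_of_forall_exists_pow_mul_mem {α : Type*} [Group α] [Fintype α]
    [DecidableEq α] (g : α) (s : Finset α) (k : ℕ) (hs : ∀ x, ∃ j < k, g ^ j * x ∈ s) :
    Fintype.card α ≤ k * #s := by
  have hcover : univ ⊆ (range k).biUnion fun j => s.image ((g ^ j)⁻¹ * ·) := by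
    intro x _
    obtain ⟨j, hj, hx⟩ := hs x
    exact mem_biUnion.2 ⟨j, mem_range.2 hj, mem_image.2 ⟨_, hx, inv_mul_cancel_left _ _⟩⟩
  calc Fintype.card α ≤ #((range k).biUnion fun j => s.image ((g ^ j)⁻¹ * ·)) :=
        card_le_card hcover
    _ ≤ #(range k) * #s := card_biUnion_le_card_mul _ _ _ fun _ _ => card_image_le
    _ = k * #s := by rw [card_range]

theorem sum_card_filter_smul_mem {H α : Type*} [Group H] [Fintype H] [MulAction H α] [Fintype α]
    [DecidableEq α] (s : Finset α) :
    ∑ x, #{h : H | h • x ∈ s} = Fintype.card H * #s := by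
  have hfiber (h : H) : #{x | h • x ∈ s} = #s :=
    card_equiv (MulAction.toPerm h) fun x => by simp
  calc ∑ x, #{h : H | h • x ∈ s} = ∑ h : H, #{x | h • x ∈ s} :=
        sum_card_bipartiteAbove_eq_sum_card_bipartiteBelow _
    _ = Fintype.card H * #s := by simp [hfiber]

theorem orderOf_le_mul_card_filter_zpowers {G : Type*} [Group G] [Fintype G] [DecidableEq G]
    (a : G) (s : Finset G) (k : ℕ) (hs : ∀ x, ∃ j < k, a ^ j * x ∈ s) (b : G) :
    orderOf a ≤ k * #{h : Subgroup.zpowers a | h • b ∈ s} := by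
  rw [← Nat.card_zpowers, Nat.card_eq_fintype_card]
  refine card_le_mul_card_of_forall_exists_pow_mul_mem ⟨a, Subgroup.mem_zpowers a⟩ _ k
    fun h => ?_
  obtain ⟨j, hj, hmem⟩ := hs (h • b)
  refine ⟨j, hj, mem_filter.2 ⟨mem_univ _, ?_⟩⟩
  simpa [mul_smul] using hmem

theorem card_div_orderOf_mul_ceil_le_card {G : Type*} [Group G] [Fintype G] [DecidableEq G]
    (a : G) (s : Finset G) (k : ℕ) (hk : 0 < k) (hs : ∀ x, ∃ j < k, a ^ j * x ∈ s) :
    Fintype.card G / orderOf a * ((orderOf a + k - 1) / k) ≤ #s := by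
  have hpos : 0 < orderOf a := orderOf_pos a
  have horbit (b : G) : (orderOf a + k - 1) / k ≤ #{h : Subgroup.zpowers a | h • b ∈ s} := by
    have := orderOf_le_mul_card_filter_zpowers a s k hs b
    rw [Nat.div_le_iff_le_mul_add_pred hk]
    omega
  have hsum : Fintype.card G * ((orderOf a + k - 1) / k) ≤ orderOf a * #s := by
    calc Fintype.card G * ((orderOf a + k - 1) / k)
        ≤ ∑ b, #{h : Subgroup.zpowers a | h • b ∈ s} := by
          simpa using sum_le_sum fun b (_ : b ∈ univ) => horbit b
      _ = orderOf a * #s := by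
          rw [sum_card_filter_smul_mem, ← Nat.card_eq_fintype_card, Nat.card_zpowers]
  refine Nat.le_of_mul_le_mul_left ?_ hpos
  calc orderOf a * (Fintype.card G / orderOf a * ((orderOf a + k - 1) / k))
      = orderOf a * (Fintype.card G / orderOf a) * ((orderOf a + k - 1) / k) := by ring
    _ ≤ Fintype.card G * ((orderOf a + k - 1) / k) := by gcongr; exact Nat.mul_div_le _ _
    _ ≤ orderOf a * #s := hsum

theorem exists_pow_mul_ne_of_iterate_eq {G : Type*} [Group G] {a : G} {k : ℕ} (hk : k ≠ 0)
    (hka : k < orderOf a) (g : G → G) (x : G) (hg : g^[k] x = x) :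
    ∃ j < k, a * (a ^ j * x) ≠ g (a ^ j * x) := by
  have hne : (a * ·)^[k] x ≠ g^[k] x := by
    rw [mul_left_iterate_apply, hg, mul_ne_right]
    exact pow_ne_one_of_lt_orderOf hk hka
  simpa only [mul_left_iterate] using Function.exists_lt_apply_iterate_ne _ g x k hne

theorem ordOf_pos {G : Type*} [Finite G] (S : Group G) (a : G) : 0 < ordOf S a :=
  letI := S; orderOf_pos a

theorem mulOf_iterate_ordOf {G : Type*} (S : Group G) (a x : G) :
    (mulOf S a)^[ordOf S a] x = x := by
  let _ := S
  change (a * ·)^[orderOf a] x = x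
  rw [mul_left_iterate_apply, pow_orderOf_eq_one, one_mul]

theorem rowDist_order_mismatched {G : Type*} [Fintype G] [DecidableEq G]
    (S T : Group G) (a : G) (σ τ : ℕ)
    (hσ : ordOf S a = σ) (hτ : ordOf T a = τ) (hlt : τ < σ) :
    (Fintype.card G / σ) * ((σ + τ - 1) / τ) ≤ rowDist S T a ∧
    Fintype.card G / τ ≤ rowDist S T a := by
  subst hσ hτ
  let _ := S
  have hτpos : 0 < ordOf T a := ordOf_pos T a
  have hwindow (x : G) : ∃ j < ordOf T a,
      a ^ j * x ∈ ({b | mulOf S a b ≠ mulOf T a b} : Finset G) := by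
    obtain ⟨j, hj, hne⟩ :=
      exists_pow_mul_ne_of_iterate_eq hτpos.ne' hlt (mulOf T a) x (mulOf_iterate_ordOf T a x)
    exact ⟨j, hj, mem_filter.2 ⟨mem_univ _, hne⟩⟩
  exact ⟨card_div_orderOf_mul_ceil_le_card a _ _ hτpos hwindow,
    Nat.div_le_of_le_mul (card_le_mul_card_of_forall_exists_pow_mul_mem a _ _ hwindow)⟩
end

section
/- Let G(∘), G(∗) be group operations on a finite set G, f : G → G a bijection, g an automorphism of G(∘) and ℓ an automorphism of G(∗). Then dist(∘_f, ∗) = dist(∘_{ℓ∘f∘g}, ∗), where ∘_f denotes the operation transported along f. -/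
/-- The distance of two binary operations. -/
def opDist {G : Type*} [Fintype G] [DecidableEq G] (m₁ m₂ : G → G → G) : ℕ :=
  (Finset.univ.filter fun p : G × G => m₁ p.1 p.2 ≠ m₂ p.1 p.2).card

/-- The row distance of two binary operations. -/
def opRowDist {G : Type*} [Fintype G] [DecidableEq G] (m₁ m₂ : G → G → G) (a : G) : ℕ :=
  (Finset.univ.filter fun b => m₁ a b ≠ m₂ a b).card

/-- The operation transported along a bijection `f`. -/
def transportOp {G : Type*} (f : G ≃ G) (m : G → G → G) : G → G → G :=
  fun a b => f (m (f.symm a) (f.symm b))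

section Transport

variable {G : Type*}

theorem transportOp_trans (e₁ e₂ : G ≃ G) (m : G → G → G) :
    transportOp (e₁.trans e₂) m = transportOp e₂ (transportOp e₁ m) :=
  rfl

theorem transportOp_eq_self (e : G ≃ G) (m : G → G → G)
    (he : ∀ a b, e (m a b) = m (e a) (e b)) : transportOp e m = m := by
  funext a b
  simp only [transportOp, he, Equiv.apply_symm_apply]

theorem opDist_transportOp [Fintype G] [DecidableEq G] (e : G ≃ G) (m₁ m₂ : G → G → G) :
    opDist (transportOp e m₁) (transportOp e m₂) = opDist m₁ m₂ := by
  refine Finset.card_equiv (e.symm.prodCongr e.symm) fun p => ?_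
  simp [transportOp]

end Transport

theorem dist_transport_aut {G : Type*} [Fintype G] [DecidableEq G] (S T : Group G)
    (f g l : G ≃ G)
    (hg : ∀ a b, g (mulOf S a b) = mulOf S (g a) (g b))
    (hl : ∀ a b, l (mulOf T a b) = mulOf T (l a) (l b)) :
    opDist (transportOp f (mulOf S)) (mulOf T)
      = opDist (transportOp (g.trans (f.trans l)) (mulOf S)) (mulOf T) := by
  calc opDist (transportOp f (mulOf S)) (mulOf T)
      = opDist (transportOp l (transportOp f (mulOf S))) (transportOp l (mulOf T)) :=
        (opDist_transportOp l _ _).symm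
    _ = opDist (transportOp (g.trans (f.trans l)) (mulOf S)) (mulOf T) := by
        rw [transportOp_eq_self l _ hl, transportOp_trans, transportOp_trans,
          transportOp_eq_self g _ hg]
end

section
/- Let p ≥ 11 be a prime, let G(∘) be the cyclic group of order 2p and G(∗) the dihedral group of order 2p defined on the same set G. Then dist(∘,∗) > 12p − 20. (Consequently the minimal distance between non-isomorphic groups of order 2p exceeds the minimal distance between isomorphic copies.) -/
/-- The integer power instance coming from a group structure `S`. -/
def zpowInst {G : Type*} (S : Group G) : Pow G ℤ := letI := S; inferInstance

/-- The multiplication instance coming from a group structure `S`. -/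
def mulInst {G : Type*} (S : Group G) : Mul G := letI := S; inferInstance

/-!
If `a ∗ a = 1` but `a ∘ a ≠ 1`, then the row of `a` in the two tables disagrees in at least half
of its entries: left `∘`-multiplication by `a` maps the agreements of the row injectively to
disagreements, since `a ∘ a ∘ b = b` is impossible. The same holds for the column of `a`.
The dihedral group `D_{2p}` has at least `p` and at most `p + 2` square roots of `1`, the cyclic
group at most `2`, so there are `r` such elements with `|r - p| ≤ 2`, and inclusion–exclusion
over their rows and columns gives `dist ≥ r (2p - r) ≥ p² - 4 > 12p - 20`.
-/

open Finset Function

theorem Function.Involutive.card_le_two_mul_card_ne {α : Type*} [Fintype α] [DecidableEq α]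
    {σ τ : α → α} (hτ : Involutive τ) (hσ : Injective σ) (hσσ : ∀ x, σ (σ x) ≠ x) :
    Fintype.card α ≤ 2 * #{x | σ x ≠ τ x} := by
  have hagree : #{x | σ x = τ x} ≤ #{x | σ x ≠ τ x} := by
    refine card_le_card_of_injOn σ (fun x hx => ?_) hσ.injOn
    simp only [coe_filter, mem_univ, true_and, Set.mem_ofPred_eq] at hx ⊢
    intro h
    exact hσσ x (by rw [h, hx, hτ])
  have hsplit : #{x | σ x = τ x} + #{x | σ x ≠ τ x} = #(univ : Finset α) :=
    card_filter_add_card_filter_not _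
  rw [card_univ] at hsplit
  omega

theorem card_mul_le_card_filter_add {α : Type*} [Fintype α] (P : α → α → Prop) [DecidableRel P]
    (R : Finset α) (hrow : ∀ a ∈ R, Fintype.card α ≤ 2 * #{b | P a b})
    (hcol : ∀ b ∈ R, Fintype.card α ≤ 2 * #{a | P a b}) :
    #R * Fintype.card α ≤ #{q : α × α | P q.1 q.2} + #R * #R := by
  classical
  set X := (R ×ˢ univ).filter fun q => P q.1 q.2
  set Y := (univ ×ˢ R).filter fun q => P q.1 q.2
  have hX : #R * Fintype.card α ≤ 2 * #X := by
    have : #X = ∑ a ∈ R, #{b | P a b} := by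
      simp only [X, card_filter, sum_product]
    rw [this, mul_sum, ← smul_eq_mul, ← sum_const]
    exact sum_le_sum hrow
  have hY : #R * Fintype.card α ≤ 2 * #Y := by
    have : #Y = ∑ b ∈ R, #{a | P a b} := by
      simp only [Y, card_filter, sum_product_right]
    rw [this, mul_sum, ← smul_eq_mul, ← sum_const]
    exact sum_le_sum hcol
  have hunion : #(X ∪ Y) ≤ #{q : α × α | P q.1 q.2} :=
    card_le_card (union_subset (filter_subset_filter _ (subset_univ _))
      (filter_subset_filter _ (subset_univ _)))
  have hinter : #(X ∩ Y) ≤ #R * #R := by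
    rw [← card_product]
    refine card_le_card fun q hq => ?_
    simp only [X, Y, mem_inter, mem_filter, mem_product] at hq
    exact mem_product.2 ⟨hq.1.1.1, hq.2.1.2⟩
  have := card_union_add_card_inter X Y
  omega

namespace DihedralGroup

variable {n : ℕ} [NeZero n]

theorem le_card_mul_self_eq_one : n ≤ #{x : DihedralGroup n | x * x = 1} := by
  calc n = #(univ.image (sr : ZMod n → DihedralGroup n)) := by
        rw [card_image_of_injective _ fun i j h => sr.inj h, card_univ, ZMod.card]
    _ ≤ _ := card_le_card fun x hx => by
      obtain ⟨i, -, rfl⟩ := mem_image.1 hx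
      exact (mem_filter_univ _).2 (sr_mul_self i)

theorem card_mul_self_eq_one_le : #{x : DihedralGroup n | x * x = 1} ≤ n + 2 := by
  have hsub : ({x : DihedralGroup n | x * x = 1} : Finset _) ⊆
      (univ.filter fun i : ZMod n => 2 • i = 0).image r ∪ univ.image sr := by
    rintro (i | i) hx
    · rw [mem_filter_univ, r_mul_r, one_def, r.injEq, ← two_nsmul] at hx
      exact mem_union_left _ (mem_image_of_mem r ((mem_filter_univ _).2 hx))
    · exact mem_union_right _ (mem_image_of_mem sr (mem_univ i))
  calc _ ≤ _ := card_le_card hsub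
    _ ≤ n + 2 := by
      grw [card_union_le, card_image_le, card_image_le, IsAddCyclic.card_nsmul_eq_zero_le two_pos,
        card_univ, ZMod.card, add_comm]

end DihedralGroup

section TwoGroupStructures

variable {G : Type*} [Fintype G] [DecidableEq G] (S T : Group G)

def sqrtOneOf : Finset G := letI := S; {a | a * a = 1}

variable {S T}

theorem involutive_mulOf_left {a : G} (ha : a ∈ sqrtOneOf T) : Involutive (mulOf T a) := by
  let := T
  intro b
  change a * (a * b) = b
  rw [← mul_assoc, (mem_filter_univ a).1 ha, one_mul]

theorem involutive_mulOf_right {a : G} (ha : a ∈ sqrtOneOf T) :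
    Involutive fun b => mulOf T b a := by
  let := T
  intro b
  change b * a * a = b
  rw [mul_assoc, (mem_filter_univ a).1 ha, mul_one]

theorem mulOf_left_mulOf_left_ne {a : G} (ha : a ∉ sqrtOneOf S) (b : G) :
    mulOf S a (mulOf S a b) ≠ b := by
  let := S
  change a * (a * b) ≠ b
  rw [← mul_assoc, Ne, mul_eq_right]
  exact fun h => ha ((mem_filter_univ a).2 h)

theorem mulOf_right_mulOf_right_ne {a : G} (ha : a ∉ sqrtOneOf S) (b : G) :
    mulOf S (mulOf S b a) a ≠ b := by
  let := S
  change b * a * a ≠ b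
  rw [mul_assoc, Ne, mul_eq_left]
  exact fun h => ha ((mem_filter_univ a).2 h)

theorem card_le_two_mul_rowDist {a : G} (hT : a ∈ sqrtOneOf T) (hS : a ∉ sqrtOneOf S) :
    Fintype.card G ≤ 2 * rowDist S T a :=
  (involutive_mulOf_left hT).card_le_two_mul_card_ne (letI := S; mul_right_injective a)
    (mulOf_left_mulOf_left_ne hS)

theorem card_le_two_mul_card_mulOf_right_ne {a : G} (hT : a ∈ sqrtOneOf T)
    (hS : a ∉ sqrtOneOf S) : Fintype.card G ≤ 2 * #{b | mulOf S b a ≠ mulOf T b a} :=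
  (involutive_mulOf_right hT).card_le_two_mul_card_ne (letI := S; mul_left_injective a)
    (mulOf_right_mulOf_right_ne hS)

theorem card_sdiff_mul_card_le_tableDist_add :
    #(sqrtOneOf T \ sqrtOneOf S) * Fintype.card G ≤
      tableDist S T + #(sqrtOneOf T \ sqrtOneOf S) * #(sqrtOneOf T \ sqrtOneOf S) :=
  card_mul_le_card_filter_add (fun a b => mulOf S a b ≠ mulOf T a b) _
    (fun _ ha => card_le_two_mul_rowDist (mem_sdiff.1 ha).1 (mem_sdiff.1 ha).2)
    (fun _ ha => card_le_two_mul_card_mulOf_right_ne (mem_sdiff.1 ha).1 (mem_sdiff.1 ha).2)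

theorem card_sqrtOneOf_le_two (hS : @IsCyclic G (zpowInst S)) : #(sqrtOneOf S) ≤ 2 := by
  let := S
  have : IsCyclic G := hS
  change #{a : G | a * a = 1} ≤ 2
  simpa only [sq] using IsCyclic.card_pow_eq_one_le (α := G) two_pos

theorem card_sqrtOneOf_eq {H : Type*} [Group H] [Fintype H] [DecidableEq H]
    (e : @MulEquiv G H (mulInst T) _) : #(sqrtOneOf T) = #{x : H | x * x = 1} := by
  let := T
  let e' : G ≃* H := e
  refine card_equiv e'.toEquiv fun a => ?_
  simp only [sqrtOneOf, mem_filter_univ, MulEquiv.toEquiv_eq_coe, EquivLike.coe_coe, ← map_mul,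
    map_eq_one_iff e' e'.injective]

end TwoGroupStructures

theorem dist_cyclic_dihedral_2p_general {G : Type*} [Fintype G] [DecidableEq G]
    (p : ℕ) (hp11 : 11 ≤ p)
    (hcard : Fintype.card G = 2 * p) (S T : Group G)
    (hS : @IsCyclic G (zpowInst S))
    (hT : Nonempty (@MulEquiv G (DihedralGroup p) (mulInst T)
      (inferInstance : Mul (DihedralGroup p)))) :
    12 * p - 20 < tableDist S T := by
  have : NeZero p := ⟨by omega⟩
  obtain ⟨e⟩ := hT
  have hT_ge : p ≤ #(sqrtOneOf T) := card_sqrtOneOf_eq e ▸ DihedralGroup.le_card_mul_self_eq_one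
  have hT_le : #(sqrtOneOf T) ≤ p + 2 :=
    card_sqrtOneOf_eq e ▸ DihedralGroup.card_mul_self_eq_one_le
  have hS_le := card_sqrtOneOf_le_two hS
  have hdist := card_sdiff_mul_card_le_tableDist_add (S := S) (T := T)
  set r := #(sqrtOneOf T \ sqrtOneOf S)
  have hr_ge : p ≤ r + 2 := by
    have := le_card_sdiff (sqrtOneOf S) (sqrtOneOf T)
    omega
  have hr_le : r ≤ p + 2 := (card_le_card sdiff_subset).trans hT_le
  rw [hcard] at hdist
  have : 12 * p < tableDist S T + 20 := by nlinarith
  omega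

theorem dist_cyclic_dihedral_2p {G : Type*} [Fintype G] [DecidableEq G]
    (p : ℕ) (hp : p.Prime) (hp11 : 11 ≤ p)
    (hcard : Fintype.card G = 2 * p) (S T : Group G)
    (hS : @IsCyclic G (zpowInst S))
    (hT : Nonempty (@MulEquiv G (DihedralGroup p) (mulInst T)
      (inferInstance : Mul (DihedralGroup p)))) :
    12 * p - 20 < tableDist S T :=
  dist_cyclic_dihedral_2p_general p hp11 hcard S T hS hT
end

section
/- A restricted edge-colored graph on v ≥ 7 vertices with at least v edges contains a rainbow 2-matching (two disjoint edges of distinct colors); i.e., μ₂(v) = v for v ≥ 7. -/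
/-!
Suppose there is no rainbow 2-matching, so any two disjoint edges have the same colour.
If no two edges are disjoint, the edges form a star or a triangle, hence there are at most
`max (v - 1) 3 < v` of them. Otherwise take disjoint edges `ab`, `xy` of colour `γ`. An edge
of another colour meets both, so it is one of the four edges of the 4-cycle `a x b y`; and if a
third edge of colour `γ` exists, it is neither `ab` nor `xy`, so it misses some edge of that
4-cycle, which therefore cannot be present. Either way at most `3 + 3` or `2 + 4` edges remain.
-/

open Finset

namespace Sym2

variable {V : Type*} {e : Sym2 V} {a b d x y : V}

theorem exists_mem_mem_mk_iff : (∃ z ∈ e, z ∈ s(a, b)) ↔ a ∈ e ∨ b ∈ e := by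
  simp only [mem_iff, and_or_left, exists_or, exists_eq_right]

theorem eq_side_of_meets_triangle (hab : a ≠ b) (hbd : b ≠ d) (had : a ≠ d)
    (h₁ : a ∈ e ∨ b ∈ e) (h₂ : b ∈ e ∨ d ∈ e) (h₃ : a ∈ e ∨ d ∈ e) :
    e = s(a, b) ∨ e = s(b, d) ∨ e = s(a, d) := by
  rw [← mem_and_mem_iff hab, ← mem_and_mem_iff hbd, ← mem_and_mem_iff had]
  tauto

theorem eq_cross_of_meets (hax : a ≠ x) (hay : a ≠ y) (hbx : b ≠ x) (hby : b ≠ y)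
    (h₁ : a ∈ e ∨ b ∈ e) (h₂ : x ∈ e ∨ y ∈ e) :
    e = s(a, x) ∨ e = s(a, y) ∨ e = s(b, x) ∨ e = s(b, y) := by
  rw [← mem_and_mem_iff hax, ← mem_and_mem_iff hay, ← mem_and_mem_iff hbx,
    ← mem_and_mem_iff hby]
  tauto

theorem exists_mem_cross_forall_not_mem [DecidableEq V] (hab : a ≠ b) (hxy : x ≠ y)
    (h₁ : e ≠ s(a, b)) (h₂ : e ≠ s(x, y)) :
    ∃ f ∈ ({s(a, x), s(a, y), s(b, x), s(b, y)} : Finset (Sym2 V)), ∀ z ∈ e, z ∉ f := by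
  by_contra! h
  have hcover : ∀ u v, s(u, v) ∈ ({s(a, x), s(a, y), s(b, x), s(b, y)} : Finset (Sym2 V)) →
      u ∈ e ∨ v ∈ e := fun u v huv => exists_mem_mem_mk_iff.1 (h _ huv)
  have := hcover a x (by simp)
  have := hcover a y (by simp)
  have := hcover b x (by simp)
  have := hcover b y (by simp)
  rw [Ne, ← mem_and_mem_iff hab] at h₁
  rw [Ne, ← mem_and_mem_iff hxy] at h₂
  tauto

end Sym2

section EdgeSets

variable {V : Type*} {E : Finset (Sym2 V)}

theorem card_le_card_sub_one_of_forall_mem [Fintype V] (hloop : ∀ e ∈ E, ¬ e.IsDiag) (a : V)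
    (ha : ∀ e ∈ E, a ∈ e) : #E ≤ Fintype.card V - 1 := by
  classical
  have hsub : E ⊆ (univ.erase a).image (fun b => s(a, b)) := fun e he =>
    mem_image.2 ⟨_, mem_erase.2 ⟨Sym2.other_ne (hloop e he) (ha e he), mem_univ _⟩,
      Sym2.other_spec _⟩
  calc #E ≤ #((univ.erase a).image (fun b => s(a, b))) := card_le_card hsub
    _ ≤ #(univ.erase a) := card_image_le
    _ = Fintype.card V - 1 := by rw [card_erase_of_mem (mem_univ a), card_univ]

theorem card_le_of_pairwise_meet [Fintype V] (hloop : ∀ e ∈ E, ¬ e.IsDiag)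
    (hmeet : ∀ e ∈ E, ∀ f ∈ E, ∃ z ∈ e, z ∈ f) : #E ≤ max (Fintype.card V - 1) 3 := by
  classical
  obtain rfl | ⟨e₁, he₁⟩ := E.eq_empty_or_nonempty
  · simp
  induction e₁ using Sym2.ind with | _ a b => ?_
  have hab : a ≠ b := fun h => hloop _ he₁ (Sym2.mk_isDiag_iff.2 h)
  by_cases ha : ∀ e ∈ E, a ∈ e
  · exact (card_le_card_sub_one_of_forall_mem hloop a ha).trans (le_max_left _ _)
  push Not at ha
  obtain ⟨e₂, he₂, ha₂⟩ := ha
  obtain ⟨d, rfl⟩ := Sym2.mem_iff_exists.1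
    ((Sym2.exists_mem_mem_mk_iff.1 (hmeet _ he₂ _ he₁)).resolve_left ha₂)
  have hbd : b ≠ d := fun h => hloop _ he₂ (Sym2.mk_isDiag_iff.2 h)
  have had : a ≠ d := fun h => ha₂ (h ▸ Sym2.mem_mk_right b d)
  by_cases hb : ∀ e ∈ E, b ∈ e
  · exact (card_le_card_sub_one_of_forall_mem hloop b hb).trans (le_max_left _ _)
  push Not at hb
  obtain ⟨e₃, he₃, hb₃⟩ := hb
  have ha₃ := (Sym2.exists_mem_mem_mk_iff.1 (hmeet _ he₃ _ he₁)).resolve_right hb₃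
  have hd₃ := (Sym2.exists_mem_mem_mk_iff.1 (hmeet _ he₃ _ he₂)).resolve_left hb₃
  rw [(Sym2.mem_and_mem_iff had).1 ⟨ha₃, hd₃⟩] at he₃
  have hsub : E ⊆ {s(a, b), s(b, d), s(a, d)} := fun e he => by
    simpa only [mem_insert, mem_singleton] using
      Sym2.eq_side_of_meets_triangle hab hbd had
        (Sym2.exists_mem_mem_mk_iff.1 (hmeet _ he _ he₁))
        (Sym2.exists_mem_mem_mk_iff.1 (hmeet _ he _ he₂))
        (Sym2.exists_mem_mem_mk_iff.1 (hmeet _ he _ he₃))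
  exact ((card_le_card hsub).trans card_le_three).trans (le_max_right _ _)

variable {C : Type*} {c : Sym2 V → C}

theorem filter_color_ne_subset_cross [DecidableEq V] [DecidableEq C]
    (hsame : ∀ e ∈ E, ∀ f ∈ E, (∀ z ∈ e, z ∉ f) → c e = c f) {a b x y : V}
    (hab : s(a, b) ∈ E) (hxy : s(x, y) ∈ E) (hdisj : ∀ z ∈ s(a, b), z ∉ s(x, y)) :
    E.filter (fun e => ¬ c e = c s(a, b)) ⊆ {s(a, x), s(a, y), s(b, x), s(b, y)} := by
  intro e he
  obtain ⟨he, hγ⟩ := mem_filter.1 he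
  have hmeet : ∀ f ∈ E, c e ≠ c f → ∃ z ∈ e, z ∈ f := fun f hf hne => by
    by_contra! h
    exact hne (hsame e he f hf h)
  have hne : ∀ u ∈ s(a, b), ∀ w ∈ s(x, y), u ≠ w := fun u hu w hw h => hdisj u hu (h ▸ hw)
  simpa only [mem_insert, mem_singleton] using
    Sym2.eq_cross_of_meets (hne a (Sym2.mem_mk_left a b) x (Sym2.mem_mk_left x y))
      (hne a (Sym2.mem_mk_left a b) y (Sym2.mem_mk_right x y))
      (hne b (Sym2.mem_mk_right a b) x (Sym2.mem_mk_left x y))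
      (hne b (Sym2.mem_mk_right a b) y (Sym2.mem_mk_right x y))
      (Sym2.exists_mem_mem_mk_iff.1 (hmeet _ hab hγ))
      (Sym2.exists_mem_mem_mk_iff.1 (hmeet _ hxy (hsame _ hab _ hxy hdisj ▸ hγ)))

theorem card_le_six_of_color_eq_of_disjoint [DecidableEq C] (hloop : ∀ e ∈ E, ¬ e.IsDiag)
    (hcol : ∀ γ : C, #(E.filter fun e => c e = γ) ≤ 3)
    (hsame : ∀ e ∈ E, ∀ f ∈ E, (∀ z ∈ e, z ∉ f) → c e = c f)
    {e₁ e₂ : Sym2 V} (he₁ : e₁ ∈ E) (he₂ : e₂ ∈ E) (hdisj : ∀ z ∈ e₁, z ∉ e₂) : #E ≤ 6 := by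
  classical
  induction e₁ using Sym2.ind with | _ a b => ?_
  induction e₂ using Sym2.ind with | _ x y => ?_
  have hab : a ≠ b := fun h => hloop _ he₁ (Sym2.mk_isDiag_iff.2 h)
  have hxy : x ≠ y := fun h => hloop _ he₂ (Sym2.mk_isDiag_iff.2 h)
  have hother := filter_color_ne_subset_cross hsame he₁ he₂ hdisj
  set cross : Finset (Sym2 V) := {s(a, x), s(a, y), s(b, x), s(b, y)}
  have hcross : #cross ≤ 4 := card_le_four
  rw [← card_filter_add_card_filter_not (fun e => c e = c s(a, b))]
  by_cases hthird : ∃ e₃ ∈ E, c e₃ = c s(a, b) ∧ e₃ ≠ s(a, b) ∧ e₃ ≠ s(x, y)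
  · obtain ⟨e₃, he₃, hγ₃, hne₁, hne₂⟩ := hthird
    obtain ⟨f, hf, hmiss⟩ := Sym2.exists_mem_cross_forall_not_mem hab hxy hne₁ hne₂
    have hother' : E.filter (fun e => ¬ c e = c s(a, b)) ⊆ cross.erase f := by
      intro e he
      obtain ⟨heE, hγe⟩ := mem_filter.1 he
      refine mem_erase.2 ⟨?_, hother he⟩
      rintro rfl
      exact hγe (hγ₃ ▸ hsame _ he₃ _ heE hmiss).symm
    have := (card_le_card hother').trans_eq (card_erase_of_mem hf)
    have := hcol (c s(a, b))
    omega
  · push Not at hthird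
    have hγE : E.filter (fun e => c e = c s(a, b)) ⊆ {s(a, b), s(x, y)} := by
      intro e he
      obtain ⟨heE, hγe⟩ := mem_filter.1 he
      by_contra hpair
      simp only [mem_insert, mem_singleton, not_or] at hpair
      exact hpair.2 (hthird e heE hγe hpair.1)
    have := (card_le_card hγE).trans card_le_two
    have := card_le_card hother
    omega

end EdgeSets

theorem rainbow_two_matching_general {V C : Type*} [Fintype V] [DecidableEq C]
    (E : Finset (Sym2 V)) (c : Sym2 V → C)
    (hloop : ∀ e ∈ E, ¬ e.IsDiag)
    (hcol : ∀ col : C, (E.filter fun e => c e = col).card ≤ 3)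
    (hv : 7 ≤ Fintype.card V)
    (hE : Fintype.card V ≤ E.card) :
    ∃ e₁ ∈ E, ∃ e₂ ∈ E, c e₁ ≠ c e₂ ∧ ∀ x ∈ e₁, x ∉ e₂ := by
  by_contra hrainbow
  have hsame : ∀ e ∈ E, ∀ f ∈ E, (∀ z ∈ e, z ∉ f) → c e = c f :=
    fun e he f hf hdisj => by_contra fun hne => hrainbow ⟨e, he, f, hf, hne, hdisj⟩
  by_cases hmeet : ∀ e ∈ E, ∀ f ∈ E, ∃ z ∈ e, z ∈ f
  · have := card_le_of_pairwise_meet hloop hmeet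
    omega
  · push Not at hmeet
    obtain ⟨e₁, he₁, e₂, he₂, hdisj⟩ := hmeet
    have := card_le_six_of_color_eq_of_disjoint hloop hcol hsame he₁ he₂ hdisj
    omega

theorem rainbow_two_matching {V C : Type*} [Fintype V] [DecidableEq V] [DecidableEq C]
    (E : Finset (Sym2 V)) (c : Sym2 V → C)
    (hloop : ∀ e ∈ E, ¬ e.IsDiag)
    (hcol : ∀ col : C, (E.filter fun e => c e = col).card ≤ 3)
    (hvert : ∀ (x : V) (col : C), (E.filter fun e => c e = col ∧ x ∈ e).card ≤ 2)
    (hv : 7 ≤ Fintype.card V)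
    (hE : Fintype.card V ≤ E.card) :
    ∃ e₁ ∈ E, ∃ e₂ ∈ E, c e₁ ≠ c e₂ ∧ ∀ x ∈ e₁, x ∉ e₂ :=
  rainbow_two_matching_general E c hloop hcol hv hE
end

section
/- For any ℓ ≥ 1 and v ≥ ℓ − 1, there is a restricted edge-colored graph on v vertices with (ℓ−1)(v − ℓ/2) edges and no ℓ-matching; hence μ_ℓ(v) ≥ 1 + (ℓ−1)(v − ℓ/2). -/
/-!
Fix a set `S` of `ℓ - 1` vertices and take every edge meeting `S`, each in its own colour; a
rainbow colouring satisfies the colour restrictions trivially. The edges of a matching meet `S`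
in pairwise distinct vertices, so no matching has more than `ℓ - 1` edges.
-/

open Finset

section EdgesMeeting

variable {α : Type*}

lemma card_le_card_of_forall_exists_mem {M : Finset (Sym2 α)} {S : Finset α}
    (hM : ∀ e₁ ∈ M, ∀ e₂ ∈ M, e₁ ≠ e₂ → ∀ x ∈ e₁, x ∉ e₂)
    (hS : ∀ e ∈ M, ∃ x ∈ e, x ∈ S) : #M ≤ #S :=
  card_le_card_of_forall_subsingleton (fun e x => x ∈ e)
    (fun e he => (hS e he).imp fun _ ⟨hxe, hxS⟩ => ⟨hxS, hxe⟩)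
    fun x _ e₁ ⟨he₁, hx₁⟩ e₂ ⟨he₂, hx₂⟩ => by
      by_contra hne
      exact hM e₁ he₁ e₂ he₂ hne x hx₁ hx₂

variable [DecidableEq α] [Fintype α]

def edgesMeeting (S : Finset α) : Finset (Sym2 α) :=
  S.offDiag.image Sym2.mk.uncurry ∪ (S ×ˢ Sᶜ).image Sym2.mk.uncurry

lemma not_isDiag_of_mem_edgesMeeting {S : Finset α} {e : Sym2 α} (he : e ∈ edgesMeeting S) :
    ¬ e.IsDiag := by
  simp only [edgesMeeting, mem_union, mem_image, Prod.exists, Function.uncurry_apply_pair,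
    mem_offDiag, mem_product, mem_compl] at he
  rcases he with ⟨a, b, ⟨-, -, hab⟩, rfl⟩ | ⟨a, b, ⟨ha, hb⟩, rfl⟩
  · exact Sym2.mk_isDiag_iff.not.2 hab
  · exact Sym2.mk_isDiag_iff.not.2 (ne_of_mem_of_not_mem ha hb)

lemma exists_mem_of_mem_edgesMeeting {S : Finset α} {e : Sym2 α} (he : e ∈ edgesMeeting S) :
    ∃ x ∈ e, x ∈ S := by
  simp only [edgesMeeting, mem_union, mem_image, Prod.exists, Function.uncurry_apply_pair,
    mem_offDiag, mem_product, mem_compl] at he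
  rcases he with ⟨a, b, ⟨ha, -⟩, rfl⟩ | ⟨a, b, ⟨ha, -⟩, rfl⟩ <;>
    exact ⟨a, Sym2.mem_mk_left a b, ha⟩

lemma card_edgesMeeting (S : Finset α) :
    #(edgesMeeting S) = (#S).choose 2 + #S * (Fintype.card α - #S) := by
  have hdisj :
      Disjoint (S.offDiag.image Sym2.mk.uncurry) ((S ×ˢ Sᶜ).image Sym2.mk.uncurry) := by
    simp only [disjoint_left, mem_image, Prod.exists, Function.uncurry_apply_pair, mem_offDiag,
      mem_product, mem_compl, not_exists, not_and]
    rintro _ ⟨a, b, ⟨ha, hb, -⟩, rfl⟩ c d ⟨-, hd⟩ h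
    rcases Sym2.eq_iff.1 h with ⟨-, rfl⟩ | ⟨-, rfl⟩
    · exact hd hb
    · exact hd ha
  have hinj : Set.InjOn Sym2.mk.uncurry ((S ×ˢ Sᶜ : Finset (α × α)) : Set (α × α)) := by
    rintro ⟨a, b⟩ hab ⟨c, d⟩ hcd h
    simp only [coe_product, coe_compl, Set.mem_prod, mem_coe, Set.mem_compl_iff] at hab hcd
    rcases Sym2.eq_iff.1 h with ⟨rfl, rfl⟩ | ⟨rfl, rfl⟩
    · rfl
    · exact absurd hab.1 hcd.2
  rw [edgesMeeting, card_union_of_disjoint hdisj, Sym2.card_image_offDiag,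
    card_image_of_injOn hinj, card_product, card_compl]

end EdgesMeeting

theorem restricted_graph_no_matching (l v : ℕ) (hl : 1 ≤ l) (hv : l - 1 ≤ v) :
    ∃ (E : Finset (Sym2 (Fin v))) (c : Sym2 (Fin v) → ℕ),
      (∀ e ∈ E, ¬ e.IsDiag) ∧
      (∀ col : ℕ, (E.filter fun e => c e = col).card ≤ 3) ∧
      (∀ (x : Fin v) (col : ℕ), (E.filter fun e => c e = col ∧ x ∈ e).card ≤ 2) ∧
      E.card = Nat.choose (l - 1) 2 + (l - 1) * (v + 1 - l) ∧
      ¬ ∃ M : Finset (Sym2 (Fin v)), M ⊆ E ∧ M.card = l ∧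
          ∀ e₁ ∈ M, ∀ e₂ ∈ M, e₁ ≠ e₂ → ∀ x ∈ e₁, x ∉ e₂ := by
  obtain ⟨S, -, hS⟩ := exists_subset_card_eq (s := (univ : Finset (Fin v))) (by simpa)
  obtain ⟨c, hc⟩ := Countable.exists_injective_nat (Sym2 (Fin v))
  have rainbow : ∀ (p : Sym2 (Fin v) → Prop) [DecidablePred p] (col : ℕ),
      #{e ∈ edgesMeeting S | c e = col ∧ p e} ≤ 1 := fun p _ col =>
    card_le_one.2 fun _ he _ he' => hc ((mem_filter.1 he).2.1.trans (mem_filter.1 he').2.1.symm)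
  refine ⟨edgesMeeting S, c, fun e => not_isDiag_of_mem_edgesMeeting, fun col => ?_,
    fun x col => (rainbow (x ∈ ·) col).trans one_le_two, ?_, ?_⟩
  · simpa using (rainbow (fun _ => True) col).trans (by norm_num : 1 ≤ 3)
  · rw [card_edgesMeeting, hS, Fintype.card_fin]
    congr 2
    omega
  · rintro ⟨M, hME, hMl, hM⟩
    have hMS : #M ≤ #S :=
      card_le_card_of_forall_exists_mem hM fun e he => exists_mem_of_mem_edgesMeeting (hME he)
    omega
end

section
/- Let G(∘), G(∗) be groups on a finite set G with U ⊆ diff(∘,∗). Define a multigraph on the vertex set G∖K whose edges are the pairs {b, a∘b} for (a,b) ∈ U with a ∈ K, b ∉ K, a∘b ∉ K, colored by a. Then between any two vertices there are at most two edges, and at most two distinct edges of any fixed color a are incident to any given vertex. -/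
/-!
An edge `s(b, a * b)` determines its colour up to inversion: if it joins `x` and `y`, then
either `b = x` and `a = y * x⁻¹`, or `b = y` and `a = x * y⁻¹`. So at most two labelled pairs
give the same edge, and an edge of colour `a` through `x` is `s(x, a * x)` or `s(a⁻¹ * x, x)`.
-/

section

variable {G : Type*} [Group G]

theorem eq_or_eq_of_sym2_mk_mul_eq {c d x y : G} (h : s(d, c * d) = s(x, y)) :
    (c, d) = (y * x⁻¹, x) ∨ (c, d) = (x * y⁻¹, y) := by
  rcases Sym2.eq_iff.mp h with ⟨rfl, rfl⟩ | ⟨rfl, rfl⟩ <;> simp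

theorem sym2_mk_mul_eq_or_eq_of_mem {a b x : G} (h : x ∈ s(b, a * b)) :
    s(b, a * b) = s(x, a * x) ∨ s(b, a * b) = s(a⁻¹ * x, x) := by
  rcases Sym2.mem_iff.mp h with rfl | rfl <;> simp

variable [DecidableEq G]

theorem card_filter_sym2_mk_mul_eq_le_two (U : Finset (G × G)) (x y : G) :
    (U.filter fun p => s(p.2, p.1 * p.2) = s(x, y)).card ≤ 2 := by
  refine (Finset.card_le_card fun p hp => ?_).trans
    (Finset.card_le_two (a := (y * x⁻¹, x)) (b := (x * y⁻¹, y)))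
  simpa using eq_or_eq_of_sym2_mk_mul_eq (Finset.mem_filter.mp hp).2

theorem card_filter_mem_image_sym2_mk_mul_le_two (U : Finset (G × G)) (a x : G) :
    (((U.filter fun p => p.1 = a).image fun p => s(p.2, p.1 * p.2)).filter
      fun e => x ∈ e).card ≤ 2 := by
  refine (Finset.card_le_card fun e he => ?_).trans
    (Finset.card_le_two (a := s(x, a * x)) (b := s(a⁻¹ * x, x)))
  obtain ⟨he, hx⟩ := Finset.mem_filter.mp he
  obtain ⟨p, hp, rfl⟩ := Finset.mem_image.mp he
  obtain rfl := (Finset.mem_filter.mp hp).2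
  simpa using sym2_mk_mul_eq_or_eq_of_mem hx

end

theorem gammaU_restricted_general {G : Type*} [DecidableEq G] (S : Group G)
    (U : Finset (G × G)) :
    (∀ x y : G, (U.filter fun p => s(p.2, mulOf S p.1 p.2) = s(x, y)).card ≤ 2) ∧
    (∀ a x : G,
      (((U.filter fun p => p.1 = a).image fun p => s(p.2, mulOf S p.1 p.2)).filter
        fun e => x ∈ e).card ≤ 2) :=
  letI := S
  ⟨card_filter_sym2_mk_mul_eq_le_two U, card_filter_mem_image_sym2_mk_mul_le_two U⟩

theorem gammaU_restricted {G : Type*} [Fintype G] [DecidableEq G] (S T : Group G)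
    (U : Finset (G × G))
    (hU : ∀ p ∈ U, mulOf S p.1 p.2 ≠ mulOf T p.1 p.2 ∧
      3 * rowDist S T p.1 < Fintype.card G ∧
      ¬ 3 * rowDist S T p.2 < Fintype.card G ∧
      ¬ 3 * rowDist S T (mulOf S p.1 p.2) < Fintype.card G) :
    (∀ x y : G, (U.filter fun p => s(p.2, mulOf S p.1 p.2) = s(x, y)).card ≤ 2) ∧
    (∀ a x : G,
      (((U.filter fun p => p.1 = a).image fun p => s(p.2, mulOf S p.1 p.2)).filter
        fun e => x ∈ e).card ≤ 2) :=
  gammaU_restricted_general S U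
end

section
/- Let G(∘), G(∗) be groups on a finite set G of size n with K = {a : dist_a < n/3} and let U = {(a,b) ∈ diff(∘,∗) : a ∈ K, b ∉ K, a∘b ∉ K}. Then |U| ≤ (n−k)(n−k−1), where k = |K|. -/
open Finset

section

variable {G : Type*}

theorem card_le_card_offDiag_of_ne_one [Group G] [DecidableEq G] {s : Finset (G × G)}
    {C : Finset G} (hs : ∀ p ∈ s, p.2 ∈ C ∧ p.1 * p.2 ∈ C ∧ p.1 ≠ 1) :
    #s ≤ #C.offDiag := by
  refine card_le_card_of_injOn (fun p => (p.2, p.1 * p.2)) (fun p hp => ?_) ?_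
  · obtain ⟨hb, hab, ha⟩ := hs p hp
    exact mem_offDiag.2 ⟨hb, hab, fun h => ha (mul_eq_right.1 h.symm)⟩
  · rintro p - q - hpq
    obtain ⟨h2, h12⟩ := Prod.mk.inj hpq
    exact Prod.ext (mul_right_cancel (h2 ▸ h12 : p.1 * q.2 = q.1 * q.2)) h2

theorem rowDist_eq_card_of_forall_mulOf_eq_self [Fintype G] [DecidableEq G] (S T : Group G)
    {a b : G} (ha : ∀ y, mulOf S a y = y) (hb : mulOf S a b ≠ mulOf T a b) :
    rowDist S T a = Fintype.card G := by
  rw [rowDist, filter_true_of_mem, card_univ]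
  intro y _ hy
  have haT : a = (letI := T; 1) := by
    let := T
    exact mul_eq_right.1 (show a * y = y from (hy.symm.trans (ha y)))
  apply hb
  rw [ha b, haT]
  exact (letI := T; one_mul b).symm

end

theorem U_card_bound {G : Type*} [Fintype G] [DecidableEq G] (S T : Group G)
    (k : ℕ) (hk : k = (Finset.univ.filter fun a : G =>
      3 * rowDist S T a < Fintype.card G).card) :
    (Finset.univ.filter fun p : G × G =>
        mulOf S p.1 p.2 ≠ mulOf T p.1 p.2 ∧
        3 * rowDist S T p.1 < Fintype.card G ∧
        ¬ 3 * rowDist S T p.2 < Fintype.card G ∧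
        ¬ 3 * rowDist S T (mulOf S p.1 p.2) < Fintype.card G).card
      ≤ (Fintype.card G - k) * (Fintype.card G - k - 1) := by
  set n := Fintype.card G
  set C := univ.filter fun a : G => ¬ 3 * rowDist S T a < n with hC_def
  have hC : #C = n - k := by
    rw [hC_def, filter_not, card_sdiff_of_subset (filter_subset _ _), card_univ, hk]
  let := S
  calc _ ≤ #C.offDiag := card_le_card_offDiag_of_ne_one fun p hp => ?_
    _ = (n - k) * (n - k - 1) := by rw [offDiag_card, hC, Nat.mul_sub_one]
  obtain ⟨hdiff, haK, hb, hab⟩ := (mem_filter.1 hp).2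
  refine ⟨mem_filter.2 ⟨mem_univ _, hb⟩, mem_filter.2 ⟨mem_univ _, hab⟩, fun ha => ?_⟩
  have := rowDist_eq_card_of_forall_mulOf_eq_self S T (fun y => by simp [mulOf, ha]) hdiff
  omega
end
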